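/- Strict dual feasibility implies exclusion: let L : ℝ^q → ℝ be convex and differentiable and λ > 0. If a minimizer θ̂ of L(θ) + λ‖θ‖₂ exists and ‖∇L(0)‖₂ < λ, then θ = 0 is a minimizer; moreover if L is strictly convex then the minimizer is unique and equals 0. -/

import Mathlib

/-! By the gradient inequality and Cauchy–Schwarz, `L θ - L 0 ≥ -‖∇L 0‖ ‖θ‖ ≥ -λ ‖θ‖`,
so `0` minimizes `L + λ‖·‖`. If `L` is strictly convex, so is `L + λ‖·‖`, and a strictly
convex function has at most one minimizer. -/

open Set

theorem ConvexOn.le_sub_of_hasFDerivAt {E : Type*} [NormedAddCommGroup E] [NormedSpace ℝ E]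
    {f : E → ℝ} {f' : E →L[ℝ] ℝ} {x : E} (hf : ConvexOn ℝ univ f)
    (hfx : HasFDerivAt f f' x) (y : E) : f' (y - x) ≤ f y - f x := by
  let line : ℝ →ᵃ[ℝ] E := AffineMap.lineMap x y
  have hline : HasDerivAt line (y - x) 0 := by
    simpa [line] using AffineMap.hasDerivAt_lineMap (a := x) (b := y) (x := (0 : ℝ))
  have hderiv : HasDerivAt (f ∘ line) (f' (y - x)) 0 := by
    apply HasFDerivAt.comp_hasDerivAt _ _ hline
    simpa [line] using hfx
  simpa [line, slope] using
    (hf.comp_affineMap line).le_slope_of_hasDerivAt (mem_univ 0) (mem_univ 1) one_pos hderiv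

section InnerProductSpace

variable {E : Type*} [NormedAddCommGroup E] [InnerProductSpace ℝ E] [CompleteSpace E]
  {f : E → ℝ} {g : E}

theorem ConvexOn.inner_gradient_le_sub {x : E} (hf : ConvexOn ℝ univ f)
    (hfx : HasGradientAt f g x) (y : E) : inner ℝ g (y - x) ≤ f y - f x :=
  hf.le_sub_of_hasFDerivAt hfx.hasFDerivAt y

theorem ConvexOn.isMinOn_add_mul_norm_of_norm_gradient_le {lam : ℝ} (hf : ConvexOn ℝ univ f)
    (hf0 : HasGradientAt f g 0) (hg : ‖g‖ ≤ lam) :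
    IsMinOn (fun θ => f θ + lam * ‖θ‖) univ 0 := by
  refine isMinOn_univ_iff.mpr fun θ => ?_
  have hfirst := hf.inner_gradient_le_sub hf0 θ
  have hcs : -inner ℝ g θ ≤ lam * ‖θ‖ := calc
    -inner ℝ g θ ≤ ‖g‖ * ‖θ‖ := (neg_le_abs _).trans (abs_real_inner_le_norm g θ)
    _ ≤ lam * ‖θ‖ := by gcongr
  simp only [sub_zero, norm_zero, mul_zero, add_zero] at hfirst ⊢
  linarith

end InnerProductSpace

theorem strict_dual_feasibility_exclusion_general {q : ℕ}
    (L : EuclideanSpace ℝ (Fin q) → ℝ)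
    (hconv : ConvexOn ℝ Set.univ L)
    (hdiff : Differentiable ℝ L)
    (lam : ℝ) (hlam : 0 < lam)
    (hdual : ‖gradient L 0‖ < lam) :
    (∀ θ : EuclideanSpace ℝ (Fin q), L 0 + lam * ‖(0 : EuclideanSpace ℝ (Fin q))‖
        ≤ L θ + lam * ‖θ‖) ∧
    (StrictConvexOn ℝ Set.univ L →
      ∀ θ : EuclideanSpace ℝ (Fin q),
        (∀ θ', L θ + lam * ‖θ‖ ≤ L θ' + lam * ‖θ'‖) → θ = 0) := by
  have hzero_min : IsMinOn (fun θ => L θ + lam * ‖θ‖) univ 0 :=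
    hconv.isMinOn_add_mul_norm_of_norm_gradient_le (hdiff 0).hasGradientAt hdual.le
  refine ⟨isMinOn_univ_iff.mp hzero_min, fun hstrict θ hθ_min => ?_⟩
  have hobj_strict : StrictConvexOn ℝ univ (fun θ => L θ + lam * ‖θ‖) :=
    hstrict.add_convexOn ((convexOn_norm convex_univ).smul hlam.le)
  exact hobj_strict.eq_of_isMinOn (isMinOn_univ_iff.mpr hθ_min) hzero_min
    (mem_univ θ) (mem_univ 0)

/-- Strict dual feasibility implies exclusion: if L is convex and
differentiable, λ > 0, a minimizer of F(θ) = L(θ) + λ‖θ‖ exists, and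
‖∇L(0)‖ < λ, then 0 is a minimizer of F; moreover, if L is strictly convex
then every minimizer of F equals 0. -/
theorem strict_dual_feasibility_exclusion {q : ℕ}
    (L : EuclideanSpace ℝ (Fin q) → ℝ)
    (hconv : ConvexOn ℝ Set.univ L)
    (hdiff : Differentiable ℝ L)
    (lam : ℝ) (hlam : 0 < lam)
    (hmin : ∃ θhat : EuclideanSpace ℝ (Fin q),
      ∀ θ, L θhat + lam * ‖θhat‖ ≤ L θ + lam * ‖θ‖)
    (hdual : ‖gradient L 0‖ < lam) :
    (∀ θ : EuclideanSpace ℝ (Fin q), L 0 + lam * ‖(0 : EuclideanSpace ℝ (Fin q))‖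
        ≤ L θ + lam * ‖θ‖) ∧
    (StrictConvexOn ℝ Set.univ L →
      ∀ θ : EuclideanSpace ℝ (Fin q),
        (∀ θ', L θ + lam * ‖θ‖ ≤ L θ' + lam * ‖θ'‖) → θ = 0) :=
  strict_dual_feasibility_exclusion_general L hconv hdiff lam hlam hdual
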